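/- arXiv:2308.02819 — 13 statements merged into one kernel-verified Lean document; each statement's English description precedes it below -/
import Mathlib

section
/- Let R be an associative unital ring, let p ∈ R satisfy p² = p, and let a, b, c ∈ R satisfy a + b + c = 1. Then [a,b,c]_p = (pap)(pbp) − (pbp)(pap). -/
/-!
The bracket is additive in its third slot and vanishes when that slot repeats one of the first
two, so `c = 1 - a - b` may be replaced by `1`. In `[a,b,1]_p` the idempotency `p² = p` cancels
`apbp` and `bpap` against each other, leaving `papbp - pbpap`.
-/

/-- The antisymmetrized triple product `[a,b,c]_p` from the partition–idempotent pairing. -/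
def tripleBracket {R : Type*} [Ring R] (a b c p : R) : R :=
  a*p*b*p*c*p + b*p*c*p*a*p + c*p*a*p*b*p - c*p*b*p*a*p - b*p*a*p*c*p - a*p*c*p*b*p

section Ring

variable {R : Type*} [Ring R]

theorem tripleBracket_add_third (a b c d p : R) :
    tripleBracket a b (c + d) p = tripleBracket a b c p + tripleBracket a b d p := by
  simp only [tripleBracket]
  noncomm_ring

theorem tripleBracket_repeat_first (a b p : R) : tripleBracket a b a p = 0 := by
  simp only [tripleBracket]
  noncomm_ring

theorem tripleBracket_repeat_second (a b p : R) : tripleBracket a b b p = 0 := by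
  simp only [tripleBracket]
  noncomm_ring

theorem tripleBracket_eq_of_add_add_eq {a b c s : R} (p : R) (h : a + b + c = s) :
    tripleBracket a b c p = tripleBracket a b s p := by
  rw [← h, tripleBracket_add_third, tripleBracket_add_third, tripleBracket_repeat_first,
    tripleBracket_repeat_second, zero_add, zero_add]

theorem tripleBracket_one_third {p : R} (hp : IsIdempotentElem p) (a b : R) :
    tripleBracket a b 1 p = (p*a*p) * (p*b*p) - (p*b*p) * (p*a*p) := by
  have hp_left (x : R) : p * (p * x) = p * x := by rw [← mul_assoc, hp.eq]
  simp only [tripleBracket, mul_one, one_mul, mul_assoc, hp.eq, hp_left]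
  abel

end Ring

/-- If `p` is idempotent and `a + b + c = 1`, then
`[a,b,c]_p = (pap)(pbp) − (pbp)(pap)`. -/
theorem tripleBracket_eq_commutator {R : Type*} [Ring R] (p a b c : R)
    (hp : p * p = p) (habc : a + b + c = 1) :
    tripleBracket a b c p = (p*a*p) * (p*b*p) - (p*b*p) * (p*a*p) := by
  rw [tripleBracket_eq_of_add_add_eq p habc, tripleBracket_one_third hp]
end

section
/- Let R be an associative unital ring, let p ∈ R satisfy p² = p, and let a, w, b, c ∈ R satisfy a + w + b + c = 1. Then [a+w, b, c]_p − [a, b+w, c]_p = (pcp)(pwp) − (pwp)(pcp). -/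
/-!
The bracket is additive in each slot and alternating, so
`[a+w,b,c] - [a,b+w,c] = [w,b,c] - [a,w,c] = [w,a+b,c]`. Since `a + b = 1 - w - c` and the
terms `[w,w,c]`, `[w,c,c]` vanish, this equals `[w,1,c]`, which for idempotent `p` collapses
to the commutator `(pcp)(pwp) - (pwp)(pcp)`.
-/

namespace tripleBracket

variable {R : Type*} [Ring R] (a a' b b' c p : R)

theorem add_left :
    tripleBracket (a + a') b c p = tripleBracket a b c p + tripleBracket a' b c p := by
  unfold tripleBracket; noncomm_ring

theorem add_middle :
    tripleBracket a (b + b') c p = tripleBracket a b c p + tripleBracket a b' c p := by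
  unfold tripleBracket; noncomm_ring

theorem swap_left : tripleBracket b a c p = -tripleBracket a b c p := by
  unfold tripleBracket; noncomm_ring

theorem self_left : tripleBracket a a c p = 0 := by
  unfold tripleBracket; noncomm_ring

theorem self_right : tripleBracket a c c p = 0 := by
  unfold tripleBracket; noncomm_ring

theorem one_middle {p : R} (hp : IsIdempotentElem p) :
    tripleBracket a 1 c p = (p*c*p) * (p*a*p) - (p*a*p) * (p*c*p) := by
  have hp_mul (x : R) : p * (p * x) = p * x := by rw [← mul_assoc, hp.eq]
  simp only [tripleBracket, mul_one, one_mul, mul_assoc, hp.eq, hp_mul]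
  abel

end tripleBracket

/-- Cobordism invariance, algebraic form: if `p` is idempotent and `a + w + b + c = 1`, then
`[a+w,b,c]_p − [a,b+w,c]_p = (pcp)(pwp) − (pwp)(pcp)`. -/
theorem tripleBracket_cobordism {R : Type*} [Ring R] (p a w b c : R)
    (hp : p * p = p) (h : a + w + b + c = 1) :
    tripleBracket (a + w) b c p - tripleBracket a (b + w) c p
      = (p*c*p) * (p*w*p) - (p*w*p) * (p*c*p) := by
  have hsplit : w + (a + b) + c = 1 := by rw [← h]; abel
  have hdrop : tripleBracket w (w + (a + b) + c) c p = tripleBracket w (a + b) c p := by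
    rw [tripleBracket.add_middle, tripleBracket.add_middle, tripleBracket.self_left,
      tripleBracket.self_right, zero_add, add_zero]
  calc tripleBracket (a + w) b c p - tripleBracket a (b + w) c p
      = tripleBracket w (a + b) c p := by
        rw [tripleBracket.add_left, tripleBracket.add_middle, tripleBracket.add_middle,
          tripleBracket.swap_left a w]
        abel
    _ = tripleBracket w 1 c p := by rw [← hdrop, hsplit]
    _ = (p*c*p) * (p*w*p) - (p*w*p) * (p*c*p) := tripleBracket.one_middle w c hp
end

section
/- Let (M,d) be a metric space and let (A,B,C) be a 2-partition of M. Define W = {a ∈ A : infEdist(a,B) ≤ infEdist(a,C)} (extended infimum distances, so that distance to the empty set is ∞). Then X = A and Y = W ∪ B are coarsely transverse half-spaces, i.e. the four sets A, Aᶜ, W ∪ B, (W ∪ B)ᶜ form a coarsely transverse collection. -/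
open Metric Bornology Set
open scoped ENNReal

/-- A finite collection of subsets of a metric space is *coarsely transverse* if for every
`r > 0` the intersection of their `r`-thickenings is bounded. -/
def CoarselyTransverse {M : Type*} [MetricSpace M] {ι : Type*} (Z : ι → Set M) : Prop :=
  ∀ r : ℝ, 0 < r → IsBounded (⋂ i, cthickening r (Z i))

/-- `X, Y` are *coarsely transverse half-spaces* if `X, Xᶜ, Y, Yᶜ` are coarsely transverse. -/
def CoarselyTransverseHalfSpaces {M : Type*} [MetricSpace M] (X Y : Set M) : Prop :=
  CoarselyTransverse ![X, Xᶜ, Y, Yᶜ]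

/-- A *2-partition* of `M`: three pairwise disjoint sets covering `M` which form a coarsely
transverse collection. -/
def IsTwoPartition {M : Type*} [MetricSpace M] (A B C : Set M) : Prop :=
  Disjoint A B ∧ Disjoint A C ∧ Disjoint B C ∧ A ∪ B ∪ C = univ ∧
    CoarselyTransverse ![A, B, C]

lemma infEdist_three_aux {M : Type*} [MetricSpace M] (x : M) (S T : Set M) (r : ℝ≥0∞)
    (hr : r ≠ ⊤) (hS : EMetric.infEdist x S ≤ r)
    (hT : ∀ s ∈ S, EMetric.infEdist s T ≤ edist s x + r) :
    EMetric.infEdist x T ≤ 3 * r := by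
  refine ENNReal.le_of_forall_pos_le_add fun ε hε _ => ?_
  have h2 : EMetric.infEdist x S < r + ε / 2 := by
    refine lt_of_le_of_lt hS ?_
    refine ENNReal.lt_add_right hr ?_
    simp [ENNReal.div_eq_top, hε.ne']
  obtain ⟨s, hs, hxs⟩ := EMetric.infEdist_lt_iff.mp h2
  calc EMetric.infEdist x T ≤ edist x s + EMetric.infEdist s T :=
        EMetric.infEdist_le_edist_add_infEdist
    _ ≤ edist x s + (edist s x + r) := by gcongr; exact hT s hs
    _ = edist x s + edist x s + r := by rw [edist_comm s x]; ring
    _ ≤ (r + ε/2) + (r + ε/2) + r := by gcongr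
    _ = 3 * r + ε := by
        rw [show r + (ε:ℝ≥0∞)/2 + (r+(ε:ℝ≥0∞)/2) + r = 3*r + ((ε:ℝ≥0∞)/2 + (ε:ℝ≥0∞)/2) from by
          ring, ENNReal.add_halves]

/-- From a 2-partition `(A,B,C)` one obtains coarsely transverse half-spaces `X = A` and
`Y = W ∪ B`, where `W` is the part of `A` at least as close to `B` as to `C`. -/
theorem halfSpaces_of_twoPartition {M : Type*} [MetricSpace M] (A B C : Set M)
    (h : IsTwoPartition A B C) (W : Set M)
    (hW : W = {a ∈ A | EMetric.infEdist a B ≤ EMetric.infEdist a C}) :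
    CoarselyTransverseHalfSpaces A (W ∪ B) := by
  obtain ⟨hAB, hAC, hBC, hcov, htr⟩ := h
  have hAc : Aᶜ = B ∪ C := by
    apply subset_antisymm
    · intro x hx
      have := hcov.symm ▸ Set.mem_univ x
      rcases this with (hx' | hx') | hx'
      · exact absurd hx' hx
      · exact Or.inl hx'
      · exact Or.inr hx'
    · intro x hx
      rcases hx with hx | hx
      · exact fun hxA => hAB.ne_of_mem hxA hx rfl
      · exact fun hxA => hAC.ne_of_mem hxA hx rfl
  intro r hr
  have h3r := htr (3 * r) (by positivity)
  refine h3r.subset ?_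
  intro x hx
  simp only [Set.mem_iInter] at hx
  have h0 := hx 0
  have h1 := hx 1
  have h2 := hx 2
  have h3 := hx 3
  simp only [Matrix.cons_val_zero, Matrix.cons_val_one, Matrix.head_cons,
    Matrix.cons_val_two, Matrix.tail_cons, Matrix.cons_val_three,
    Metric.mem_cthickening_iff] at h0 h1 h2 h3
  set ρ : ℝ≥0∞ := ENNReal.ofReal r with hρ
  have hρt : ρ ≠ ⊤ := ENNReal.ofReal_ne_top
  have h3ρ : (3 : ℝ≥0∞) * ρ ≤ ENNReal.ofReal (3 * r) := by
    rw [ENNReal.ofReal_mul (by norm_num)]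
    simp [ENNReal.ofReal_ofNat, hρ]
  -- distance to B
  have hB : EMetric.infEdist x B ≤ 3 * ρ := by
    refine infEdist_three_aux x (W ∪ B) B ρ hρt h2 ?_
    intro s hs
    rcases hs with hs | hs
    · rw [hW] at hs
      have hmin : EMetric.infEdist s B = EMetric.infEdist s Aᶜ := by
        rw [hAc]; unfold EMetric.infEdist; rw [Metric.infEDist_union]
        exact (min_eq_left hs.2).symm
      calc EMetric.infEdist s B = EMetric.infEdist s Aᶜ := hmin
        _ ≤ edist s x + EMetric.infEdist x Aᶜ := EMetric.infEdist_le_edist_add_infEdist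
        _ ≤ edist s x + ρ := by gcongr; exact h1
    · simp [EMetric.infEdist, Metric.infEDist_zero_of_mem hs]
  -- distance to C
  have hC : EMetric.infEdist x C ≤ 3 * ρ := by
    refine infEdist_three_aux x (W ∪ B)ᶜ C ρ hρt h3 ?_
    intro s hs
    have hsU := hcov.symm ▸ Set.mem_univ s
    rcases hsU with (hsA | hsB) | hsC
    · have hsW : s ∉ W := fun hw => hs (Or.inl hw)
      rw [hW] at hsW
      have hle : EMetric.infEdist s C ≤ EMetric.infEdist s B := by
        by_contra hlt
        push_neg at hlt
        exact hsW ⟨hsA, hlt.le⟩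
      have hmin : EMetric.infEdist s C = EMetric.infEdist s Aᶜ := by
        rw [hAc]; unfold EMetric.infEdist; rw [Metric.infEDist_union]
        exact (min_eq_right hle).symm
      calc EMetric.infEdist s C = EMetric.infEdist s Aᶜ := hmin
        _ ≤ edist s x + EMetric.infEdist x Aᶜ := EMetric.infEdist_le_edist_add_infEdist
        _ ≤ edist s x + ρ := by gcongr; exact h1
    · exact absurd (Or.inr hsB) hs
    · simp [EMetric.infEdist, Metric.infEDist_zero_of_mem hsC]
  simp only [Set.mem_iInter]
  intro i
  fin_cases i <;>
    simp only [Matrix.cons_val_zero, Matrix.cons_val_one, Matrix.head_cons,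
      Matrix.cons_val_two, Matrix.tail_cons, Metric.mem_cthickening_iff, Fin.isValue] <;>
    [exact le_trans h0 (ENNReal.ofReal_le_ofReal (by linarith));
     exact le_trans hB h3ρ;
     exact le_trans hC h3ρ]
end

section
/- Let (M,d) be a metric space, let (A,B,C) be a 2-partition of M, and set W = {a ∈ A : infEdist(a,B) ≤ infEdist(a,C)} (extended infimum distances). Then for every r > 0 one has the inclusions W_r ∩ C_r ⊆ B_{6r} and (A ∖ W)_r ∩ B_r ⊆ C_{6r}; in particular, W_r ∩ C_r and (A ∖ W)_r ∩ B_r are bounded for every r > 0. -/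
open Metric Bornology Set

open Metric Bornology Set EMetric ENNReal NNReal

lemma aux_incl {M : Type*} [MetricSpace M] (S T U : Set M)
    (hS : ∀ s ∈ S, EMetric.infEdist s T ≤ EMetric.infEdist s U) (r : ℝ) (hr : 0 < r) :
    cthickening r S ∩ cthickening r U ⊆ cthickening (6 * r) T := by
  rintro x ⟨hxS, hxU⟩
  rw [mem_cthickening_iff] at hxS hxU ⊢
  refine ENNReal.le_of_forall_pos_le_add fun ε hε _ => ?_
  have h2 : EMetric.infEdist x S < ENNReal.ofReal r + (ε / 2 : ℝ≥0) := by
    refine lt_of_le_of_lt hxS ?_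
    refine ENNReal.lt_add_right ENNReal.ofReal_ne_top ?_
    exact_mod_cast (half_pos hε).ne'
  obtain ⟨s, hsS, hxs⟩ := EMetric.infEdist_lt_iff.1 h2
  have key : EMetric.infEdist x T ≤ edist x s + (edist s x + EMetric.infEdist x U) := by
    calc EMetric.infEdist x T ≤ edist x s + EMetric.infEdist s T :=
          EMetric.infEdist_le_edist_add_infEdist
      _ ≤ edist x s + EMetric.infEdist s U := by gcongr; exact hS s hsS
      _ ≤ edist x s + (edist s x + EMetric.infEdist x U) := by
          gcongr; exact EMetric.infEdist_le_edist_add_infEdist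
  have : EMetric.infEdist x T ≤ (ENNReal.ofReal r + (ε / 2 : ℝ≥0)) +
      ((ENNReal.ofReal r + (ε / 2 : ℝ≥0)) + ENNReal.ofReal r) := by
    have hxs' : edist x s ≤ ENNReal.ofReal r + (ε / 2 : ℝ≥0) := hxs.le
    have hsx : edist s x ≤ ENNReal.ofReal r + (ε / 2 : ℝ≥0) := by
      rw [edist_comm]; exact hxs.le
    refine key.trans ?_
    gcongr; exact hxU
  refine this.trans ?_
  have h3 : ENNReal.ofReal r + ENNReal.ofReal r + ENNReal.ofReal r ≤ ENNReal.ofReal (6 * r) := by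
    rw [← ENNReal.ofReal_add hr.le hr.le, ← ENNReal.ofReal_add (by linarith) hr.le]
    exact ENNReal.ofReal_le_ofReal (by linarith)
  have h4 : ((ε / 2 : ℝ≥0) : ℝ≥0∞) + (ε / 2 : ℝ≥0) = (ε : ℝ≥0∞) := by
    rw [← ENNReal.coe_add]; norm_cast; exact add_halves ε
  calc (ENNReal.ofReal r + (ε / 2 : ℝ≥0)) + ((ENNReal.ofReal r + (ε / 2 : ℝ≥0)) + ENNReal.ofReal r)
      = (ENNReal.ofReal r + ENNReal.ofReal r + ENNReal.ofReal r) +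
        (((ε / 2 : ℝ≥0) : ℝ≥0∞) + (ε / 2 : ℝ≥0)) := by ring
    _ ≤ ENNReal.ofReal (6 * r) + ε := by rw [h4]; gcongr

/-- For a 2-partition `(A,B,C)` and `W = {a ∈ A : d(a,B) ≤ d(a,C)}`, one has
`W_r ∩ C_r ⊆ B_{6r}` and `(A ∖ W)_r ∩ B_r ⊆ C_{6r}`; in particular these intersections are
bounded. -/
theorem thickening_inclusions_of_twoPartition {M : Type*} [MetricSpace M] (A B C : Set M)
    (h : IsTwoPartition A B C) (W : Set M)
    (hW : W = {a ∈ A | EMetric.infEdist a B ≤ EMetric.infEdist a C}) :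
    ∀ r : ℝ, 0 < r →
      (cthickening r W ∩ cthickening r C ⊆ cthickening (6 * r) B) ∧
      (cthickening r (A \ W) ∩ cthickening r B ⊆ cthickening (6 * r) C) ∧
      IsBounded (cthickening r W ∩ cthickening r C) ∧
      IsBounded (cthickening r (A \ W) ∩ cthickening r B) := by
  intro r hr
  have hWA : W ⊆ A := by rw [hW]; exact fun a ha => ha.1
  have h1 : ∀ s ∈ W, EMetric.infEdist s B ≤ EMetric.infEdist s C := by
    rw [hW]; exact fun s hs => hs.2
  have h2 : ∀ s ∈ A \ W, EMetric.infEdist s C ≤ EMetric.infEdist s B := by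
    rintro s ⟨hsA, hsW⟩
    rw [hW] at hsW
    simp only [mem_setOf_eq, hsA, true_and, not_le] at hsW
    exact hsW.le
  have incl1 := aux_incl W B C h1 r hr
  have incl2 := aux_incl (A \ W) C B h2 r hr
  have hbig := h.2.2.2.2 (6 * r) (by linarith)
  have hr6 : r ≤ 6 * r := by linarith
  refine ⟨incl1, incl2, hbig.subset ?_, hbig.subset ?_⟩
  · refine subset_iInter fun i => ?_
    fin_cases i
    · exact (inter_subset_left.trans ((cthickening_mono hr6 W).trans
        (cthickening_subset_of_subset _ hWA)))
    · exact incl1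
    · exact inter_subset_right.trans (cthickening_mono hr6 C)
  · refine subset_iInter fun i => ?_
    fin_cases i
    · exact (inter_subset_left.trans ((cthickening_mono hr6 (A \ W)).trans
        (cthickening_subset_of_subset _ diff_subset)))
    · exact inter_subset_right.trans (cthickening_mono hr6 B)
    · exact incl2
end

section
/- Let (M,d) be a metric space, q ≥ 0, and let (A_0, …, A_q) be a q-partition of M. Let i ≠ j be two indices and let W ⊆ A_i be a subset such that the collection consisting of W together with all A_k for k ∉ {i,j} is coarsely transverse. Then the family obtained from (A_0, …, A_q) by replacing A_i with A_i ∖ W and A_j with A_j ∪ W is again a q-partition of M. -/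
/-!
Moving `W ⊆ A i` into `A j` relabels the points of `W` as belonging to piece `j` and leaves every
other point where it was, so the new family is again a partition. A point `r`-close to every new
piece is either `r`-close to every old piece, or `r`-close to `W` and to every old piece other than
`A j`; both sets are bounded, the second because `W` is coarsely transverse to the `A k` with
`k ∉ {i, j}`.
-/

open Metric Bornology Set

/-- A *q-partition* of `M`: an ordered collection of pairwise disjoint sets with union `M`
which forms a coarsely transverse collection. -/
def IsQPartition {M : Type*} [MetricSpace M] {ι : Type*} (A : ι → Set M) : Prop :=
  Pairwise (Function.onFun Disjoint A) ∧ (⋃ i, A i) = univ ∧ CoarselyTransverse A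

section MoveSubset

variable {α ι : Type*} [DecidableEq ι]

def moveSubset (A : ι → Set α) (i j : ι) (W : Set α) (k : ι) : Set α :=
  if k = i then A i \ W else if k = j then A j ∪ W else A k

variable {A : ι → Set α} {i j : ι} {W : Set α}

theorem moveSubset_subset {k : ι} (hk : k ≠ j) : moveSubset A i j W k ⊆ A k := by
  unfold moveSubset
  split_ifs with hki
  · exact hki ▸ sdiff_subset
  · exact subset_rfl

theorem moveSubset_target (hij : i ≠ j) : moveSubset A i j W j = A j ∪ W := by
  simp [moveSubset, hij.symm]

theorem mem_moveSubset_iff (hA : Pairwise (Function.onFun Disjoint A)) (hij : i ≠ j)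
    (hWA : W ⊆ A i) {x : α} {k : ι} :
    x ∈ moveSubset A i j W k ↔ x ∈ W ∧ k = j ∨ x ∉ W ∧ x ∈ A k := by
  by_cases hxW : x ∈ W
  · have hxk : x ∈ A k ↔ k = i := ⟨fun hx => by_contra fun hki =>
      (hA hki).notMem_of_mem_left hx (hWA hxW), fun hki => hki ▸ hWA hxW⟩
    unfold moveSubset
    split_ifs with hki hkj <;> simp_all
  · unfold moveSubset
    split_ifs with hki hkj <;> simp_all

theorem pairwise_disjoint_moveSubset (hA : Pairwise (Function.onFun Disjoint A)) (hij : i ≠ j)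
    (hWA : W ⊆ A i) : Pairwise (Function.onFun Disjoint (moveSubset A i j W)) := by
  intro a b hab
  refine Set.disjoint_left.2 fun x hxa hxb => ?_
  rw [mem_moveSubset_iff hA hij hWA] at hxa hxb
  rcases hxa with ⟨hxW, rfl⟩ | ⟨hxW, hxa⟩
  · rcases hxb with ⟨-, rfl⟩ | ⟨hxW', -⟩
    exacts [hab rfl, hxW' hxW]
  · rcases hxb with ⟨hxW', -⟩ | ⟨-, hxb⟩
    exacts [hxW hxW', (hA hab).notMem_of_mem_left hxa hxb]

theorem iUnion_moveSubset (hA : Pairwise (Function.onFun Disjoint A)) (hij : i ≠ j)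
    (hWA : W ⊆ A i) : ⋃ k, moveSubset A i j W k = ⋃ k, A k := by
  ext x
  simp only [mem_iUnion, mem_moveSubset_iff hA hij hWA]
  by_cases hxW : x ∈ W
  · exact ⟨fun _ => ⟨i, hWA hxW⟩, fun _ => ⟨j, .inl ⟨hxW, rfl⟩⟩⟩
  · simp [hxW]

end MoveSubset

section Thickening

variable {M ι : Type*} [MetricSpace M]

theorem iInter_cthickening_subset_union {A B : ι → Set M} {j : ι} {W : Set M} (r : ℝ)
    (hB : ∀ k, k ≠ j → B k ⊆ A k) (hBj : B j ⊆ A j ∪ W) :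
    ⋂ k, cthickening r (B k) ⊆
      (⋂ k, cthickening r (A k)) ∪
        (cthickening r W ∩ ⋂ k ∈ {k | k ≠ j}, cthickening r (A k)) := by
  intro x hx
  rw [mem_iInter] at hx
  have hxA : ∀ k, k ≠ j → x ∈ cthickening r (A k) := fun k hk =>
    cthickening_subset_of_subset r (hB k hk) (hx k)
  have hxj : x ∈ cthickening r (A j) ∪ cthickening r W := by
    rw [← cthickening_union]
    exact cthickening_subset_of_subset r hBj (hx j)
  rcases hxj with hxAj | hxW
  · refine Or.inl (mem_iInter.2 fun k => ?_)
    rcases eq_or_ne k j with rfl | hk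
    exacts [hxAj, hxA k hk]
  · exact Or.inr ⟨hxW, mem_iInter₂.2 hxA⟩

theorem CoarselyTransverse.of_subset_union {A B : ι → Set M} {j : ι} {W : Set M}
    (hA : CoarselyTransverse A)
    (hW : ∀ r : ℝ, 0 < r →
      IsBounded (cthickening r W ∩ ⋂ k ∈ {k | k ≠ j}, cthickening r (A k)))
    (hB : ∀ k, k ≠ j → B k ⊆ A k) (hBj : B j ⊆ A j ∪ W) : CoarselyTransverse B :=
  fun r hr => ((hA r hr).union (hW r hr)).subset (iInter_cthickening_subset_union r hB hBj)

end Thickening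

/-- Elementary cobordism: moving a portion `W ⊆ A i` from `A i` to `A j` yields another
`q`-partition, provided `W` together with the `A k`, `k ∉ {i,j}`, is coarsely transverse. -/
theorem qPartition_elementary_cobordism {M : Type*} [MetricSpace M] (q : ℕ)
    (A : Fin (q + 1) → Set M) (hA : IsQPartition A)
    (i j : Fin (q + 1)) (hij : i ≠ j) (W : Set M) (hWA : W ⊆ A i)
    (hct : ∀ r : ℝ, 0 < r →
      IsBounded (cthickening r W ∩ ⋂ k ∈ {k | k ≠ i ∧ k ≠ j}, cthickening r (A k))) :
    IsQPartition (fun k => if k = i then A i \ W else if k = j then A j ∪ W else A k) := by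
  obtain ⟨hdisj, hunion, htrans⟩ := hA
  have hW : ∀ r : ℝ, 0 < r →
      IsBounded (cthickening r W ∩ ⋂ k ∈ {k | k ≠ j}, cthickening r (A k)) := fun r hr =>
    (hct r hr).subset <| inter_subset_inter_right _ <| biInter_subset_biInter_left fun _ hk => hk.2
  refine ⟨pairwise_disjoint_moveSubset hdisj hij hWA,
    (iUnion_moveSubset hdisj hij hWA).trans hunion, ?_⟩
  exact htrans.of_subset_union hW (fun _ => moveSubset_subset) (moveSubset_target hij).subset
end

section
/- Let (M,d) be a metric space, X, Y ⊆ M, r₀ > 0 and μ ≥ 1, and suppose that every subcollection of the four r₀-thickened quadrants (X∩Y)_{r₀}, (X∩Yᶜ)_{r₀}, (Xᶜ∩Y)_{r₀}, (Xᶜ∩Yᶜ)_{r₀} is polynomially excisive with exponent μ. Then the collection X_{r₀}, (Xᶜ)_{r₀}, Y_{r₀}, (Yᶜ)_{r₀} is polynomially excisive with exponent μ. -/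
open Metric Bornology Set

/-- A collection of subsets indexed by `i ∈ S` is *polynomially excisive with exponent `μ`* if
for every `r ≥ 0`, the intersection of the `r`-thickenings is contained in the
`r^μ`-thickening of the intersection. -/
def PolyExcisiveOn {M : Type*} [MetricSpace M] {ι : Type*} (Z : ι → Set M) (S : Set ι)
    (μ : ℝ) : Prop :=
  ∀ r : ℝ, 0 ≤ r → (⋂ i ∈ S, cthickening r (Z i)) ⊆ cthickening (r ^ μ) (⋂ i ∈ S, Z i)

lemma quad_aux {M : Type*} [MetricSpace M] (Q : Fin 4 → Set M) (μ r : ℝ) (hr : 0 ≤ r)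
    (hpoly : ∀ S : Set (Fin 4), PolyExcisiveOn Q S μ) (a b c d : Fin 4) (x : M)
    (ha : x ∈ cthickening r (Q a)) (hb : x ∈ cthickening r (Q b))
    (hc : x ∈ cthickening r (Q c)) (hd : x ∈ cthickening r (Q d))
    (T : Set M) (hT : Q a ∩ Q b ∩ Q c ∩ Q d ⊆ T) :
    x ∈ cthickening (r ^ μ) T := by
  have hx : x ∈ ⋂ i ∈ ({a, b, c, d} : Set (Fin 4)), cthickening r (Q i) := by
    simp only [Set.mem_iInter]
    rintro i hi
    simp only [Set.mem_insert_iff, Set.mem_singleton_iff] at hi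
    rcases hi with rfl | rfl | rfl | rfl <;> assumption
  have h2 := hpoly {a, b, c, d} r hr hx
  refine cthickening_subset_of_subset _ (fun y hy => hT ?_) h2
  simp only [Set.mem_iInter, Set.mem_insert_iff, Set.mem_singleton_iff] at hy
  exact ⟨⟨⟨hy a (by tauto), hy b (by tauto)⟩, hy c (by tauto)⟩, hy d (by tauto)⟩

/-- If every subcollection of the four `r₀`-thickened quadrants of `X, Y` is polynomially
excisive with exponent `μ`, then the collection `X_{r₀}, (Xᶜ)_{r₀}, Y_{r₀}, (Yᶜ)_{r₀}` is
polynomially excisive with exponent `μ`. -/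
theorem halfSpaces_polyExcisive_of_quadrants {M : Type*} [MetricSpace M] (X Y : Set M)
    (r₀ μ : ℝ) (hr₀ : 0 < r₀) (hμ : 1 ≤ μ)
    (Q : Fin 4 → Set M)
    (hQ : Q = ![cthickening r₀ (X ∩ Y), cthickening r₀ (X ∩ Yᶜ),
                cthickening r₀ (Xᶜ ∩ Y), cthickening r₀ (Xᶜ ∩ Yᶜ)])
    (hpoly : ∀ S : Set (Fin 4), PolyExcisiveOn Q S μ) :
    ∀ r : ℝ, 0 ≤ r →
      cthickening r (cthickening r₀ X) ∩ cthickening r (cthickening r₀ Xᶜ) ∩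
        cthickening r (cthickening r₀ Y) ∩ cthickening r (cthickening r₀ Yᶜ) ⊆
      cthickening (r ^ μ)
        (cthickening r₀ X ∩ cthickening r₀ Xᶜ ∩ cthickening r₀ Y ∩ cthickening r₀ Yᶜ) := by
  intro r hr x hx
  obtain ⟨⟨⟨hX, hX'⟩, hY⟩, hY'⟩ := hx
  have eX : cthickening r₀ X = Q 0 ∪ Q 1 := by
    rw [hQ]; simp only [Matrix.cons_val_zero, Matrix.cons_val_one, Matrix.head_cons]
    rw [← cthickening_union, Set.inter_union_compl]
  have eX' : cthickening r₀ Xᶜ = Q 2 ∪ Q 3 := by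
    rw [hQ]; simp only [Matrix.cons_val_two, Matrix.tail_cons, Matrix.head_cons,
      Matrix.cons_val_three]
    rw [← cthickening_union, Set.inter_union_compl]
  have eY : cthickening r₀ Y = Q 0 ∪ Q 2 := by
    rw [hQ]; simp only [Matrix.cons_val_zero, Matrix.cons_val_two, Matrix.tail_cons,
      Matrix.head_cons]
    rw [← cthickening_union]
    congr 1
    rw [Set.inter_comm X Y, Set.inter_comm Xᶜ Y, ← Set.inter_union_distrib_left,
      Set.union_compl_self, Set.inter_univ]
  have eY' : cthickening r₀ Yᶜ = Q 1 ∪ Q 3 := by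
    rw [hQ]; simp only [Matrix.cons_val_one, Matrix.head_cons, Matrix.cons_val_three,
      Matrix.tail_cons, Matrix.cons_val_zero]
    rw [← cthickening_union]
    congr 1
    rw [Set.inter_comm X Yᶜ, Set.inter_comm Xᶜ Yᶜ, ← Set.inter_union_distrib_left,
      Set.union_compl_self, Set.inter_univ]
  rw [eX, cthickening_union] at hX
  rw [eX', cthickening_union] at hX'
  rw [eY, cthickening_union] at hY
  rw [eY', cthickening_union] at hY'
  have sub : ∀ a b c d : Fin 4, Q a ⊆ cthickening r₀ X → Q b ⊆ cthickening r₀ Xᶜ →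
      Q c ⊆ cthickening r₀ Y → Q d ⊆ cthickening r₀ Yᶜ →
      Q a ∩ Q b ∩ Q c ∩ Q d ⊆
        cthickening r₀ X ∩ cthickening r₀ Xᶜ ∩ cthickening r₀ Y ∩ cthickening r₀ Yᶜ :=
    fun a b c d h1 h2 h3 h4 => Set.inter_subset_inter
      (Set.inter_subset_inter (Set.inter_subset_inter h1 h2) h3) h4
  have s0X : Q 0 ⊆ cthickening r₀ X := eX ▸ Set.subset_union_left
  have s1X : Q 1 ⊆ cthickening r₀ X := eX ▸ Set.subset_union_right
  have s2X' : Q 2 ⊆ cthickening r₀ Xᶜ := eX' ▸ Set.subset_union_left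
  have s3X' : Q 3 ⊆ cthickening r₀ Xᶜ := eX' ▸ Set.subset_union_right
  have s0Y : Q 0 ⊆ cthickening r₀ Y := eY ▸ Set.subset_union_left
  have s2Y : Q 2 ⊆ cthickening r₀ Y := eY ▸ Set.subset_union_right
  have s1Y' : Q 1 ⊆ cthickening r₀ Yᶜ := eY' ▸ Set.subset_union_left
  have s3Y' : Q 3 ⊆ cthickening r₀ Yᶜ := eY' ▸ Set.subset_union_right
  rcases hX with hX | hX <;> rcases hX' with hX' | hX' <;>
    rcases hY with hY | hY <;> rcases hY' with hY' | hY' <;>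
    exact quad_aux Q μ r hr hpoly _ _ _ _ x hX hX' hY hY' _
      (sub _ _ _ _ (by assumption) (by assumption) (by assumption) (by assumption))
end

section
/- Let (M,d) be a metric space, X, Y ⊆ M, r₀ > 0 and μ ≥ 1, and suppose that every subcollection of the four r₀-thickened quadrants (X∩Y)_{r₀}, (X∩Yᶜ)_{r₀}, (Xᶜ∩Y)_{r₀}, (Xᶜ∩Yᶜ)_{r₀} is polynomially excisive with exponent μ. Then the collection of three sets X_{r₀}, (Xᶜ∩Y)_{r₀}, (Xᶜ∩Yᶜ)_{r₀} is polynomially excisive with exponent μ, and symmetrically so is Y_{r₀}, (X∩Yᶜ)_{r₀}, (Xᶜ∩Yᶜ)_{r₀}. -/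
open Metric Bornology Set

/-! Thickening commutes with finite unions, so `X_{r₀} = (X ∩ Y)_{r₀} ∪ (X ∩ Yᶜ)_{r₀}`, and the
excision estimate for `X_{r₀}, (Xᶜ ∩ Y)_{r₀}, (Xᶜ ∩ Yᶜ)_{r₀}` is the union of the estimates for the
two quadrant triples containing `(X ∩ Y)_{r₀}` resp. `(X ∩ Yᶜ)_{r₀}`; symmetrically for `Y`. -/

section

variable {M : Type*} [MetricSpace M]

theorem cthickening_union_inter_subset {A B C D : Set M} {r s : ℝ}
    (hA : cthickening r A ∩ D ⊆ cthickening s (A ∩ C))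
    (hB : cthickening r B ∩ D ⊆ cthickening s (B ∩ C)) :
    cthickening r (A ∪ B) ∩ D ⊆ cthickening s ((A ∪ B) ∩ C) := by
  rw [cthickening_union, union_inter_distrib_right, union_inter_distrib_right, cthickening_union]
  exact union_subset_union hA hB

theorem PolyExcisiveOn.union_triple {ι : Type*} {Z : ι → Set M} {μ : ℝ} {i j k l : ι}
    (hi : PolyExcisiveOn Z {i, k, l} μ) (hj : PolyExcisiveOn Z {j, k, l} μ)
    (r : ℝ) (hr : 0 ≤ r) :
    cthickening r (Z i ∪ Z j) ∩ cthickening r (Z k) ∩ cthickening r (Z l) ⊆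
      cthickening (r ^ μ) ((Z i ∪ Z j) ∩ Z k ∩ Z l) := by
  simp only [inter_assoc]
  apply cthickening_union_inter_subset
  · simpa only [biInter_insert, biInter_singleton] using hi r hr
  · simpa only [biInter_insert, biInter_singleton] using hj r hr

end

theorem polyPartition_of_quadrants_general {M : Type*} [MetricSpace M] (X Y : Set M)
    (r₀ μ : ℝ)
    (Q : Fin 4 → Set M)
    (hQ : Q = ![cthickening r₀ (X ∩ Y), cthickening r₀ (X ∩ Yᶜ),
                cthickening r₀ (Xᶜ ∩ Y), cthickening r₀ (Xᶜ ∩ Yᶜ)])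
    (hpoly : ∀ S : Set (Fin 4), PolyExcisiveOn Q S μ) :
    (∀ r : ℝ, 0 ≤ r →
      cthickening r (cthickening r₀ X) ∩ cthickening r (cthickening r₀ (Xᶜ ∩ Y)) ∩
        cthickening r (cthickening r₀ (Xᶜ ∩ Yᶜ)) ⊆
      cthickening (r ^ μ)
        (cthickening r₀ X ∩ cthickening r₀ (Xᶜ ∩ Y) ∩ cthickening r₀ (Xᶜ ∩ Yᶜ))) ∧
    (∀ r : ℝ, 0 ≤ r →
      cthickening r (cthickening r₀ Y) ∩ cthickening r (cthickening r₀ (X ∩ Yᶜ)) ∩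
        cthickening r (cthickening r₀ (Xᶜ ∩ Yᶜ)) ⊆
      cthickening (r ^ μ)
        (cthickening r₀ Y ∩ cthickening r₀ (X ∩ Yᶜ) ∩ cthickening r₀ (Xᶜ ∩ Yᶜ))) := by
  subst hQ
  have hX : cthickening r₀ X = cthickening r₀ (X ∩ Y) ∪ cthickening r₀ (X ∩ Yᶜ) := by
    rw [← cthickening_union, inter_union_compl]
  have hY : cthickening r₀ Y = cthickening r₀ (X ∩ Y) ∪ cthickening r₀ (Xᶜ ∩ Y) := by
    rw [← cthickening_union, ← union_inter_distrib_right, union_compl_self, univ_inter]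
  refine ⟨fun r hr => ?_, fun r hr => ?_⟩
  · rw [hX]
    exact (hpoly {0, 2, 3}).union_triple (j := 1) (hpoly {1, 2, 3}) r hr
  · rw [hY]
    exact (hpoly {0, 1, 3}).union_triple (j := 2) (hpoly {2, 1, 3}) r hr

/-- If every subcollection of the four `r₀`-thickened quadrants of `X, Y` is polynomially
excisive with exponent `μ`, then the triples `X_{r₀}, (Xᶜ∩Y)_{r₀}, (Xᶜ∩Yᶜ)_{r₀}` and
`Y_{r₀}, (X∩Yᶜ)_{r₀}, (Xᶜ∩Yᶜ)_{r₀}` are polynomially excisive with exponent `μ`. -/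
theorem polyPartition_of_quadrants {M : Type*} [MetricSpace M] (X Y : Set M)
    (r₀ μ : ℝ) (hr₀ : 0 < r₀) (hμ : 1 ≤ μ)
    (Q : Fin 4 → Set M)
    (hQ : Q = ![cthickening r₀ (X ∩ Y), cthickening r₀ (X ∩ Yᶜ),
                cthickening r₀ (Xᶜ ∩ Y), cthickening r₀ (Xᶜ ∩ Yᶜ)])
    (hpoly : ∀ S : Set (Fin 4), PolyExcisiveOn Q S μ) :
    (∀ r : ℝ, 0 ≤ r →
      cthickening r (cthickening r₀ X) ∩ cthickening r (cthickening r₀ (Xᶜ ∩ Y)) ∩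
        cthickening r (cthickening r₀ (Xᶜ ∩ Yᶜ)) ⊆
      cthickening (r ^ μ)
        (cthickening r₀ X ∩ cthickening r₀ (Xᶜ ∩ Y) ∩ cthickening r₀ (Xᶜ ∩ Yᶜ))) ∧
    (∀ r : ℝ, 0 ≤ r →
      cthickening r (cthickening r₀ Y) ∩ cthickening r (cthickening r₀ (X ∩ Yᶜ)) ∩
        cthickening r (cthickening r₀ (Xᶜ ∩ Yᶜ)) ⊆
      cthickening (r ^ μ)
        (cthickening r₀ Y ∩ cthickening r₀ (X ∩ Yᶜ) ∩ cthickening r₀ (Xᶜ ∩ Yᶜ))) :=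
  polyPartition_of_quadrants_general X Y r₀ μ Q hQ hpoly
end

section
/- Let (M,d) be a metric space, let Z_0, …, Z_q ⊆ M and μ ≥ 1 be such that ⋂_{n=0}^q (Z_n)_r ⊆ (⋂_{n=0}^q Z_n)_{r^μ} for all r ≥ 0. Let V ⊆ M be a nonempty subset with diam(V) ≤ r₀. Then for every ε > 0, the set-to-set distance D(V, ⋂_{n=0}^q Z_n) (the infimum over v ∈ V of the extended infimum distance from v to ⋂ Z_n, valued in [0,∞]) satisfies D(V, ⋂_{n=0}^q Z_n) ≤ (r₀ + ε + max_{0≤n≤q} D(V, Z_n))^μ. -/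
/-!
Pick any point `v ∈ V`. By the triangle inequality through the other points of `V`, the
distance from `v` to each `Z n` is at most `diam V + D(V, Z n)`, so `v` lies in every
`r`-thickening with `r = diam V + maxₙ D(V, Z n)`. Polynomial excision puts `v` within `r ^ μ`
of `⋂ Z n`, and `D(V, ⋂ Z n) ≤ infEDist v (⋂ Z n)`.
-/

open Metric Bornology Set ENNReal

/-- The set-to-set distance, valued in `[0,∞]` (it is `∞` if either set is empty). -/
noncomputable def setEDist {M : Type*} [MetricSpace M] (S T : Set M) : ℝ≥0∞ :=
  ⨅ s ∈ S, EMetric.infEdist s T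

def IsPolyExcisive {M ι : Type*} [MetricSpace M] (Z : ι → Set M) (μ : ℝ) : Prop :=
  ∀ r : ℝ, 0 ≤ r → (⋂ n, cthickening r (Z n)) ⊆ cthickening (r ^ μ) (⋂ n, Z n)

theorem IsPolyExcisive.infEDist_iInter_le {M ι : Type*} [MetricSpace M] {Z : ι → Set M}
    {μ : ℝ} (hZ : IsPolyExcisive Z μ) (hμ : 0 < μ) {x : M} {R : ℝ≥0∞}
    (hx : ∀ n, infEDist x (Z n) ≤ R) : infEDist x (⋂ n, Z n) ≤ R ^ μ := by
  rcases eq_top_or_lt_top R with rfl | hR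
  · simp [top_rpow_of_pos hμ]
  have hmem : x ∈ ⋂ n, cthickening R.toReal (Z n) :=
    mem_iInter.2 fun n => mem_cthickening_iff.2 <| (ofReal_toReal hR.ne).symm ▸ hx n
  calc infEDist x (⋂ n, Z n) ≤ ENNReal.ofReal (R.toReal ^ μ) :=
        mem_cthickening_iff.1 (hZ _ toReal_nonneg hmem)
    _ = R ^ μ := by rw [← ofReal_rpow_of_nonneg toReal_nonneg hμ.le, ofReal_toReal hR.ne]

theorem infEDist_le_setEDist_add_ediam {M : Type*} [MetricSpace M] {S : Set M} {x : M}
    (hx : x ∈ S) (T : Set M) : infEDist x T ≤ setEDist S T + ediam S := by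
  simp only [setEDist, ENNReal.iInf_add]
  refine le_iInf₂ fun s hs => ?_
  calc infEDist x T ≤ infEDist s T + edist x s := infEDist_le_infEDist_add_edist
    _ ≤ infEDist s T + ediam S := by gcongr; exact edist_le_ediam_of_mem hx hs

theorem setEDist_iInter_le_of_polyExcisive_general {M : Type*} [MetricSpace M] (q : ℕ)
    (Z : Fin (q + 1) → Set M) (μ : ℝ) (hμ : 1 ≤ μ)
    (hpoly : ∀ r : ℝ, 0 ≤ r →
      (⋂ n, cthickening r (Z n)) ⊆ cthickening (r ^ μ) (⋂ n, Z n))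
    (V : Set M) (hV : V.Nonempty) (r₀ : ℝ)
    (hdiam : EMetric.diam V ≤ ENNReal.ofReal r₀)
    (ε : ℝ) :
    setEDist V (⋂ n, Z n) ≤
      (ENNReal.ofReal r₀ + ENNReal.ofReal ε + ⨆ n, setEDist V (Z n)) ^ μ := by
  obtain ⟨v, hv⟩ := hV
  have hZ : IsPolyExcisive Z μ := hpoly
  have hdist (n) : infEDist v (Z n) ≤ ediam V + ⨆ n, setEDist V (Z n) :=
    (infEDist_le_setEDist_add_ediam hv (Z n)).trans <| by
      rw [add_comm]; gcongr; exact le_iSup (fun n => setEDist V (Z n)) n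
  calc setEDist V (⋂ n, Z n) ≤ infEDist v (⋂ n, Z n) := iInf₂_le v hv
    _ ≤ (ediam V + ⨆ n, setEDist V (Z n)) ^ μ := hZ.infEDist_iInter_le (by linarith) hdist
    _ ≤ _ := by gcongr; exact hdiam.trans le_self_add

/-- For a polynomially excisive collection `Z_0, …, Z_q` with exponent `μ` and a nonempty set
`V` of diameter at most `r₀`, the distance from `V` to `⋂ Z_n` is bounded by
`(r₀ + ε + max_n D(V, Z_n))^μ`, for every `ε > 0`. -/
theorem setEDist_iInter_le_of_polyExcisive {M : Type*} [MetricSpace M] (q : ℕ)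
    (Z : Fin (q + 1) → Set M) (μ : ℝ) (hμ : 1 ≤ μ)
    (hpoly : ∀ r : ℝ, 0 ≤ r →
      (⋂ n, cthickening r (Z n)) ⊆ cthickening (r ^ μ) (⋂ n, Z n))
    (V : Set M) (hV : V.Nonempty) (r₀ : ℝ)
    (hdiam : EMetric.diam V ≤ ENNReal.ofReal r₀)
    (ε : ℝ) (hε : 0 < ε) :
    setEDist V (⋂ n, Z n) ≤
      (ENNReal.ofReal r₀ + ENNReal.ofReal ε + ⨆ n, setEDist V (Z n)) ^ μ :=
  setEDist_iInter_le_of_polyExcisive_general q Z μ hμ hpoly V hV r₀ hdiam ε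
end

section
/- Let M be a set, q ≥ 0, and let A : Fin(q+1) → Set M be a family of pairwise disjoint subsets whose union is M. Define φ : (Fin(q+1) → M) → ℤ by φ(x) = Σ_{σ ∈ Perm(Fin(q+1))} sgn(σ) · Π_{i} 1_{A(σ(i))}(x(i)), where 1_S denotes the indicator function of S. Then φ is a coarse cocycle: for every x : Fin(q+2) → M, Σ_{i=0}^{q+1} (−1)^i φ(x ∘ succAbove_i) = 0, where x ∘ succAbove_i denotes the tuple obtained from x by omitting the i-th entry. -/
/-!
`φ y` is the determinant of the square matrix `(1_{A a}(y i))_{a,i}` (Leibniz formula). Put a row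
of ones on top of the `(q+1) × (q+2)` indicator matrix of `x`: Laplace expansion along that row
gives the coboundary of `φ` at `x`. Since the `A a` partition `M`, every column of the indicator
matrix sums to `1`, so the row of ones is the sum of the other rows and the determinant vanishes.
-/

open Set

theorem Set.sum_indicator_one_of_partition {ι M R : Type*} [Fintype ι] [AddCommMonoidWithOne R]
    {A : ι → Set M} (hdisj : Pairwise (Function.onFun Disjoint A)) (hcov : (⋃ i, A i) = univ)
    (m : M) : ∑ i, (A i).indicator (fun _ => (1 : R)) m = 1 := by
  rw [← Finset.indicator_biUnion_apply _ _ (hdisj.set_pairwise _)]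
  simp [hcov]

theorem Matrix.det_of_cons_one_eq_zero {R : Type*} [CommRing R] {n : ℕ}
    (B : Matrix (Fin n) (Fin (n + 1)) R) (hB : ∀ j, ∑ i, B i j = 1) :
    (Matrix.of (Fin.cons (fun _ => 1) B) : Matrix (Fin (n + 1)) (Fin (n + 1)) R).det = 0 := by
  set N : Matrix (Fin (n + 1)) (Fin (n + 1)) R := Matrix.of (Fin.cons (fun _ => 1) B)
  have hrow : N 0 = ∑ k, (Fin.cons 0 fun _ => 1 : Fin (n + 1) → R) k • N k := by
    funext j
    rw [Finset.sum_apply, Fin.sum_univ_succ]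
    simp only [Pi.smul_apply, Fin.cons_zero, Fin.cons_succ, zero_smul, one_smul, zero_add]
    exact (hB j).symm
  have := Matrix.det_updateRow_sum N 0 (Fin.cons 0 fun _ => 1)
  rwa [← hrow, Matrix.updateRow_eq_self, Fin.cons_zero, zero_smul] at this

theorem Matrix.alternating_sum_det_submatrix_succAbove_eq_zero {R : Type*} [CommRing R] {n : ℕ}
    (B : Matrix (Fin n) (Fin (n + 1)) R) (hB : ∀ j, ∑ i, B i j = 1) :
    ∑ j : Fin (n + 1), (-1 : R) ^ (j : ℕ) * (B.submatrix id j.succAbove).det = 0 := by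
  rw [← Matrix.det_of_cons_one_eq_zero B hB, Matrix.det_succ_row_zero]
  exact Finset.sum_congr rfl fun j _ => (congrArg (· * _) (mul_one _)).symm

/-- The antisymmetric cochain associated to a partition is a coarse cocycle: its coboundary
vanishes. This uses only that the sets `A i` are pairwise disjoint and cover `M`. -/
theorem partition_cochain_is_cocycle {M : Type*} (q : ℕ) (A : Fin (q + 1) → Set M)
    (hdisj : Pairwise (Function.onFun Disjoint A)) (hcov : (⋃ i, A i) = univ)
    (φ : (Fin (q + 1) → M) → ℤ)
    (hφ : ∀ x : Fin (q + 1) → M,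
      φ x = ∑ σ : Equiv.Perm (Fin (q + 1)),
        (Equiv.Perm.sign σ : ℤ) *
          ∏ i, (A (σ i)).indicator (fun _ => (1 : ℤ)) (x i)) :
    ∀ x : Fin (q + 2) → M,
      ∑ i : Fin (q + 2), (-1 : ℤ) ^ (i : ℕ) * φ (x ∘ i.succAbove) = 0 := by
  intro x
  set B : Matrix (Fin (q + 1)) (Fin (q + 2)) ℤ :=
    Matrix.of fun a j => (A a).indicator (fun _ => 1) (x j)
  have hface : ∀ j : Fin (q + 2), φ (x ∘ j.succAbove) = (B.submatrix id j.succAbove).det := by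
    intro j
    rw [hφ, Matrix.det_apply']
    rfl
  simp only [hface]
  exact Matrix.alternating_sum_det_submatrix_succAbove_eq_zero B
    fun j => Set.sum_indicator_one_of_partition hdisj hcov (x j)
end

section
/- Let (M,d) be a metric space and let (A,B,C) be a 2-partition of M. Define φ(x,y,z) = Σ_σ sgn(σ) 1_{D_{σ(0)}}(x) 1_{D_{σ(1)}}(y) 1_{D_{σ(2)}}(z), the sum over permutations σ of {0,1,2}, with (D_0,D_1,D_2) = (A,B,C). Then for every r > 0, the set {x ∈ M : ∃ y, z ∈ M with d(x,y) ≤ r, d(x,z) ≤ r, d(y,z) ≤ r, and φ(x,y,z) ≠ 0} is contained in A_r ∩ B_r ∩ C_r, and is therefore bounded. (Thus φ_{A,B,C} is a coarse 2-cochain: its support intersects every r-neighbourhood of the diagonal in a bounded set.) -/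
/-!
A nonzero value `φ x y z` comes from a permutation `σ` with `x ∈ D (σ 0)`, `y ∈ D (σ 1)` and
`z ∈ D (σ 2)`. As `σ` is onto, each of `A`, `B`, `C` then contains one of `x, y, z`, all within
distance `r` of `x`; so `x ∈ A_r ∩ B_r ∩ C_r`, which is bounded by coarse transversality.
-/

open Metric Bornology Set

lemma mem_iInter_cthickening_of_surjective {M ι : Type*} [MetricSpace M] {D : ι → Set M}
    {σ : ι → ι} (hσ : Function.Surjective σ) {p : ι → M} {x : M} {r : ℝ}
    (hp : ∀ i, p i ∈ D (σ i)) (hdist : ∀ i, dist x (p i) ≤ r) :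
    x ∈ ⋂ i, cthickening r (D i) :=
  mem_iInter.2 fun i => by
    obtain ⟨j, rfl⟩ := hσ i
    exact mem_cthickening_of_dist_le x (p j) r _ (hp j) (hdist j)

lemma mem_of_mul_indicator_ne_zero {α R : Type*} [MulZeroClass R] {a b c : Set α}
    {f g k : α → R} {s : R} {x y z : α}
    (h : s * a.indicator f x * b.indicator g y * c.indicator k z ≠ 0) :
    x ∈ a ∧ y ∈ b ∧ z ∈ c :=
  ⟨mem_of_indicator_ne_zero (right_ne_zero_of_mul (left_ne_zero_of_mul (left_ne_zero_of_mul h))),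
    mem_of_indicator_ne_zero (right_ne_zero_of_mul (left_ne_zero_of_mul h)),
    mem_of_indicator_ne_zero (right_ne_zero_of_mul h)⟩

lemma iInter_matrix_vecCons_fin_three {α β : Type*} (f : α → Set β) (a b c : α) :
    ⋂ i, f (![a, b, c] i) = f a ∩ f b ∩ f c := by
  ext
  simp [Fin.forall_fin_succ, and_assoc]

/-- The cochain `φ_{A,B,C}` associated to a 2-partition is a coarse 2-cochain: its support
meets every `r`-neighbourhood of the diagonal in a subset of `A_r ∩ B_r ∩ C_r`, which is
bounded. -/
theorem partition_cochain_is_coarse {M : Type*} [MetricSpace M] (A B C : Set M)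
    (h : IsTwoPartition A B C) (D : Fin 3 → Set M) (hD : D = ![A, B, C])
    (φ : M → M → M → ℤ)
    (hφ : ∀ x y z, φ x y z = ∑ σ : Equiv.Perm (Fin 3),
      (Equiv.Perm.sign σ : ℤ) * (D (σ 0)).indicator (fun _ => (1 : ℤ)) x *
        (D (σ 1)).indicator (fun _ => (1 : ℤ)) y *
        (D (σ 2)).indicator (fun _ => (1 : ℤ)) z) :
    ∀ r : ℝ, 0 < r →
      {x : M | ∃ y z : M, dist x y ≤ r ∧ dist x z ≤ r ∧ dist y z ≤ r ∧ φ x y z ≠ 0} ⊆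
          cthickening r A ∩ cthickening r B ∩ cthickening r C ∧
      IsBounded
        {x : M | ∃ y z : M, dist x y ≤ r ∧ dist x z ≤ r ∧ dist y z ≤ r ∧ φ x y z ≠ 0} := by
  intro r hr
  have hsupp : {x : M | ∃ y z : M, dist x y ≤ r ∧ dist x z ≤ r ∧ dist y z ≤ r ∧ φ x y z ≠ 0} ⊆
      ⋂ i, cthickening r (D i) := by
    rintro x ⟨y, z, hxy, hxz, -, hne⟩
    rw [hφ] at hne
    obtain ⟨σ, -, hσ⟩ := Finset.exists_ne_zero_of_sum_ne_zero hne
    obtain ⟨hx, hy, hz⟩ := mem_of_mul_indicator_ne_zero hσ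
    refine mem_iInter_cthickening_of_surjective σ.surjective (p := ![x, y, z]) ?_ ?_
    · simpa [Fin.forall_fin_succ] using ⟨hx, hy, hz⟩
    · simpa [Fin.forall_fin_succ, hr.le] using ⟨hxy, hxz⟩
  subst hD
  exact ⟨iInter_matrix_vecCons_fin_three (cthickening r) A B C ▸ hsupp,
    (h.2.2.2.2 r hr).subset hsupp⟩
end

section
/- Let (M,d) be a metric space equipped with its Borel σ-algebra, let r₀ > 0, and let γ : ℕ → M be an injective sequence such that M = ⋃_n closedBall(γ(n), r₀) and such that for every r > 0 there exists N(r) ∈ ℕ with #{n : γ(n) ∈ K} ≤ N(r) for every subset K ⊆ M of diameter at most r. Then there exists a family V : ℕ → Set M of pairwise disjoint Borel sets such that ⋃_n V(n) = M, diam(V(n)) ≤ 2r₀ for every n, and the family is uniformly locally finite: for every r > 0 there exists N ∈ ℕ such that every subset K ⊆ M of diameter at most r satisfies #{n : K ∩ V(n) ≠ ∅} ≤ N. -/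
open Metric Set

/-- Bounded geometry implies the existence of a tiling: a countable family of pairwise
disjoint Borel sets covering `M`, of uniformly bounded diameter, which is uniformly locally
finite. -/
theorem exists_tiling_of_boundedGeometry {M : Type*} [MetricSpace M] [MeasurableSpace M]
    [BorelSpace M] (r₀ : ℝ) (hr₀ : 0 < r₀) (γ : ℕ → M) (hγ : Function.Injective γ)
    (hcov : (⋃ n, closedBall (γ n) r₀) = univ)
    (hbg : ∀ r : ℝ, 0 < r → ∃ N : ℕ, ∀ K : Set M, EMetric.diam K ≤ ENNReal.ofReal r →
      {n : ℕ | γ n ∈ K}.Finite ∧ {n : ℕ | γ n ∈ K}.ncard ≤ N) :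
    ∃ V : ℕ → Set M,
      (∀ n, MeasurableSet (V n)) ∧
      Pairwise (Function.onFun Disjoint V) ∧
      (⋃ n, V n) = univ ∧
      (∀ n, EMetric.diam (V n) ≤ ENNReal.ofReal (2 * r₀)) ∧
      (∀ r : ℝ, 0 < r → ∃ N : ℕ, ∀ K : Set M, EMetric.diam K ≤ ENNReal.ofReal r →
        {n : ℕ | (K ∩ V n).Nonempty}.Finite ∧ {n : ℕ | (K ∩ V n).Nonempty}.ncard ≤ N) := by
  classical
  set V : ℕ → Set M := fun n => closedBall (γ n) r₀ \ ⋃ m < n, closedBall (γ m) r₀ with hV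
  have hVsub : ∀ n, V n ⊆ closedBall (γ n) r₀ := fun n => diff_subset
  refine ⟨V, ?_, ?_, ?_, ?_, ?_⟩
  · intro n
    exact measurableSet_closedBall.diff
      (MeasurableSet.biUnion (to_countable _) fun m _ => measurableSet_closedBall)
  · intro i j hij
    rcases hij.lt_or_gt with h | h
    · refine Set.disjoint_left.2 fun x hxi hxj => ?_
      exact hxj.2 (mem_biUnion h hxi.1)
    · refine Set.disjoint_left.2 fun x hxi hxj => ?_
      exact hxi.2 (mem_biUnion h hxj.1)
  · apply eq_univ_of_forall
    intro x
    have hx : x ∈ ⋃ n, closedBall (γ n) r₀ := hcov ▸ mem_univ x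
    rcases mem_iUnion.mp hx with ⟨n, hn⟩
    have hex : ∃ n, x ∈ closedBall (γ n) r₀ := ⟨n, hn⟩
    set k := Nat.find hex with hk
    refine mem_iUnion.2 ⟨k, Nat.find_spec hex, ?_⟩
    intro hmem
    rcases mem_iUnion₂.mp hmem with ⟨m, hm, hxm⟩
    exact absurd hxm (Nat.find_min hex hm)
  · intro n
    refine le_trans (EMetric.diam_mono (hVsub n)) (EMetric.diam_le fun x hx y hy => ?_)
    rw [edist_dist]
    refine ENNReal.ofReal_le_ofReal ?_
    calc dist x y ≤ dist x (γ n) + dist (γ n) y := dist_triangle _ _ _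
      _ ≤ r₀ + r₀ := add_le_add hx (by rw [dist_comm]; exact hy)
      _ = 2 * r₀ := by ring
  · intro r hr
    obtain ⟨N, hN⟩ := hbg (r + 2 * r₀) (by linarith)
    refine ⟨N, fun K hK => ?_⟩
    have hsub : {n : ℕ | (K ∩ V n).Nonempty} ⊆ {n : ℕ | γ n ∈ cthickening r₀ K} := by
      rintro n ⟨x, hxK, hxV⟩
      have : dist (γ n) x ≤ r₀ := by
        rw [dist_comm]; exact hVsub n hxV
      exact mem_cthickening_of_dist_le _ _ _ _ hxK this
    have hdiam : EMetric.diam (cthickening r₀ K) ≤ ENNReal.ofReal (r + 2 * r₀) := by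
      have h2 := Metric.ediam_cthickening_le (s := K) r₀.toNNReal
      rw [Real.coe_toNNReal r₀ hr₀.le] at h2
      refine h2.trans ?_
      rw [ENNReal.ofReal_add hr.le (by positivity)]
      gcongr
      · exact hK
      rw [ENNReal.ofReal_mul (by norm_num)]
      simp [ENNReal.ofReal, Real.toNNReal_ofNat]
    obtain ⟨hfin, hcard⟩ := hN _ hdiam
    exact ⟨hfin.subset hsub, le_trans (Set.ncard_le_ncard hsub hfin) hcard⟩
end

section
/- Let q ≥ 1 and let x_0, …, x_q ∈ ℝ^q be points such that 0 lies in the interior of the convex hull of {x_0, …, x_q}. For each i ∈ {0,…,q} let A_i = {Σ_{k≠i} λ_k x_k : λ_k ∈ ℝ, λ_k ≥ 0 for all k} be the convex cone generated by the points other than x_i. Then the collection A_0, …, A_q is coarsely transverse: for every r > 0 the intersection (A_0)_r ∩ … ∩ (A_q)_r is bounded. -/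
open Metric Bornology Set

lemma exists_pos_combo {n : ℕ} {V : Type*} [NormedAddCommGroup V] [NormedSpace ℝ V]
    (x : Fin n → V) (h0 : (0:V) ∈ interior (convexHull ℝ (Set.range x))) :
    ∃ t : Fin n → ℝ, (∀ k, 0 < t k) ∧ ∑ k, t k = 1 ∧ ∑ k, t k • x k = 0 := by
  obtain ⟨ε, hε, hball⟩ : ∃ ε > 0, Metric.ball (0:V) ε ⊆ convexHull ℝ (Set.range x) :=
    Metric.mem_nhds_iff.1 (mem_interior_iff_mem_nhds.1 h0)
  set w := ∑ k, x k with hw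
  set δ : ℝ := ε / (2 * (1 + ‖w‖)) with hδ
  have hwpos : (0:ℝ) < 1 + ‖w‖ := by positivity
  have hδpos : 0 < δ := by positivity
  have hmem : (-δ) • w ∈ Metric.ball (0:V) ε := by
    rw [mem_ball_zero_iff, norm_smul, norm_neg, Real.norm_of_nonneg hδpos.le]
    have h1 : δ * (1 + ‖w‖) = ε / 2 := by
      rw [hδ]; field_simp
    nlinarith [norm_nonneg w]
  have hmem2 := hball hmem
  rw [convexHull_range_eq_exists_affineCombination] at hmem2
  obtain ⟨s, wt, hwt0, hwt1, hcomb⟩ := hmem2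
  rw [Finset.affineCombination_eq_linear_combination s x wt hwt1] at hcomb
  set μ : Fin n → ℝ := fun k => if k ∈ s then wt k else 0 with hμ
  have hμ0 : ∀ k, 0 ≤ μ k := by
    intro k; simp only [hμ]; split
    · exact hwt0 _ ‹_›
    · exact le_refl 0
  have hμ1 : ∑ k, μ k = 1 := by
    simp only [hμ, Finset.sum_ite_mem, Finset.univ_inter, hwt1]
  have hμx : ∑ k, μ k • x k = (-δ) • w := by
    simp only [hμ, ite_smul, zero_smul, Finset.sum_ite_mem, Finset.univ_inter, hcomb]
  set T : ℝ := 1 + n * δ with hT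
  have hTpos : 0 < T := by positivity
  refine ⟨fun k => (μ k + δ) / T, fun k => div_pos (by linarith [hμ0 k]) hTpos, ?_, ?_⟩
  · rw [← Finset.sum_div, div_eq_one_iff_eq hTpos.ne']
    simp [Finset.sum_add_distrib, hμ1, hT, mul_comm]
  · have : ∑ k, ((μ k + δ) / T) • x k = T⁻¹ • ∑ k, (μ k + δ) • x k := by
      rw [Finset.smul_sum]
      congr 1; funext k
      rw [div_eq_inv_mul, mul_smul]
    rw [this]
    have h2 : ∑ k, (μ k + δ) • x k = 0 := by
      simp only [add_smul, Finset.sum_add_distrib, hμx, ← Finset.smul_sum, ← hw]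
      simp [neg_smul]
    rw [h2, smul_zero]

set_option maxHeartbeats 2000000 in
/-- The conical partition of Euclidean space: if `0` lies in the interior of the convex hull
of `x_0, …, x_q ∈ ℝ^q`, then the cones `A_i` generated by the points other than `x_i` form a
coarsely transverse collection. -/
theorem conical_partition_coarselyTransverse (q : ℕ) (hq : 1 ≤ q)
    (x : Fin (q + 1) → EuclideanSpace ℝ (Fin q))
    (h0 : (0 : EuclideanSpace ℝ (Fin q)) ∈ interior (convexHull ℝ (Set.range x)))
    (A : Fin (q + 1) → Set (EuclideanSpace ℝ (Fin q)))
    (hA : ∀ i, A i = {y : EuclideanSpace ℝ (Fin q) |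
      ∃ lam : Fin (q + 1) → ℝ, (∀ k, 0 ≤ lam k) ∧ lam i = 0 ∧ y = ∑ k, lam k • x k}) :
    ∀ r : ℝ, 0 < r → IsBounded (⋂ i, cthickening r (A i)) := by
  obtain ⟨t, ht0, ht1, htc⟩ := exists_pos_combo x h0
  have hsub : convexHull ℝ (Set.range x) ⊆ (Submodule.span ℝ (Set.range x) : Set _) :=
    convexHull_min Submodule.subset_span (Submodule.span ℝ (Set.range x)).convex
  have hspan : Submodule.span ℝ (Set.range x) = ⊤ :=
    (Submodule.span ℝ (Set.range x)).eq_top_of_nonempty_interior'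
      ⟨0, interior_mono hsub h0⟩
  -- subtype family
  set v : {k : Fin (q+1) // k ≠ 0} → EuclideanSpace ℝ (Fin q) := fun k => x k with hv
  have hsplit : ∀ (f : Fin (q+1) → EuclideanSpace ℝ (Fin q)),
      ∑ k, f k = f 0 + ∑ k : {k : Fin (q+1) // k ≠ 0}, f k := by
    intro f
    rw [← Finset.add_sum_erase _ f (Finset.mem_univ 0)]
    congr 1
    exact (Finset.sum_subtype (p := fun k => k ≠ 0) (Finset.univ.erase 0) (fun k => by simp) f)
  have hx0 : x 0 = (-(t 0)⁻¹) • ∑ k : {k : Fin (q+1) // k ≠ 0}, t k • x k := by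
    have h := htc
    rw [hsplit (fun k => t k • x k)] at h
    have h2 : t 0 • x 0 = -∑ k : {k : Fin (q+1) // k ≠ 0}, t (k:Fin (q+1)) • x (k:Fin (q+1)) := by
      rw [eq_neg_iff_add_eq_zero]; exact h
    rw [neg_smul, ← smul_neg, ← h2, inv_smul_smul₀ (ht0 0).ne']
  have hspan2 : ⊤ ≤ Submodule.span ℝ (Set.range v) := by
    rw [← hspan]
    apply Submodule.span_le.2
    rintro _ ⟨j, rfl⟩
    by_cases hj : j = 0
    · subst hj
      rw [hx0]
      exact Submodule.smul_mem _ _ (Submodule.sum_mem _ (fun k _ =>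
        Submodule.smul_mem _ _ (Submodule.subset_span ⟨k, rfl⟩)))
    · exact Submodule.subset_span ⟨⟨j, hj⟩, rfl⟩
  have hcard : Fintype.card {k : Fin (q+1) // k ≠ 0} = Module.finrank ℝ (EuclideanSpace ℝ (Fin q)) := by
    rw [finrank_euclideanSpace_fin]
    simp [Fintype.card_subtype_compl]
  set b := basisOfTopLeSpanOfCardEqFinrank v hspan2 hcard with hbdef
  have hb : ∀ k, b k = x (k : Fin (q+1)) := by
    intro k
    rw [hbdef, coe_basisOfTopLeSpanOfCardEqFinrank]
  -- linear functionals
  set f : Fin (q+1) → (EuclideanSpace ℝ (Fin q) →ₗ[ℝ] ℝ) := fun i =>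
    b.constr ℝ (fun k => if (k : Fin (q+1)) = i then (1 - t i)/(t i) else -1) with hf
  have hfv : ∀ i (k : {k : Fin (q+1) // k ≠ 0}),
      f i (x (k : Fin (q+1))) = if (k : Fin (q+1)) = i then (1 - t i)/(t i) else -1 := by
    intro i k
    rw [← hb k, hf]
    exact Module.Basis.constr_basis b ℝ _ k
  have hsplitR : ∀ (g : Fin (q+1) → ℝ),
      ∑ k, g k = g 0 + ∑ k : {k : Fin (q+1) // k ≠ 0}, g k := by
    intro g
    rw [← Finset.add_sum_erase _ g (Finset.mem_univ 0)]
    congr 1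
    exact (Finset.sum_subtype (p := fun k => k ≠ 0) (Finset.univ.erase 0) (fun k => by simp) g)
  have hfval : ∀ i k, f i (x k) = if k = i then (1 - t i)/(t i) else -1 := by
    intro i k
    by_cases hk : k = 0
    · subst hk
      -- from the relation
      have hrel : (0:ℝ) = ∑ m, t m * f i (x m) := by
        have h := congrArg (f i) htc
        rw [map_sum] at h
        simp only [map_smul, smul_eq_mul] at h
        simp only [map_smul, smul_eq_mul, map_zero] at h
        exact h.symm
      rw [hsplitR (fun m => t m * f i (x m))] at hrel
      have hsub : ∀ m : {k : Fin (q+1) // k ≠ 0},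
          t (m:Fin (q+1)) * f i (x (m:Fin (q+1)))
            = -(t (m:Fin (q+1))) + (if (m:Fin (q+1)) = i then 1 else 0) := by
        intro m
        rw [hfv i m]
        split
        · rename_i h
          rw [h]
          have hne : t i ≠ 0 := (ht0 i).ne'
          field_simp
          ring
        · ring
      rw [Finset.sum_congr rfl (fun m _ => hsub m), Finset.sum_add_distrib] at hrel
      have hs1 : ∑ m : {k : Fin (q+1) // k ≠ 0}, -(t (m:Fin (q+1))) = -(1 - t 0) := by
        have := hsplitR t
        rw [ht1] at this
        rw [Finset.sum_neg_distrib]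
        have h2 : 1 - t 0 = ∑ m : {k : Fin (q+1) // k ≠ 0}, t (m:Fin (q+1)) := by linarith
        rw [← h2]
      have hs2 : ∑ m : {k : Fin (q+1) // k ≠ 0}, (if (m:Fin (q+1)) = i then (1:ℝ) else 0)
          = if i = 0 then 0 else 1 := by
        by_cases hi : i = 0
        · rw [if_pos hi]
          apply Finset.sum_eq_zero
          intro m _
          rw [if_neg (by rw [hi]; exact m.2)]
        · rw [if_neg hi]
          rw [Finset.sum_eq_single_of_mem ⟨i, hi⟩ (Finset.mem_univ _)]
          · rw [if_pos rfl]
          · intro m _ hne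
            exact if_neg (fun h => hne (Subtype.ext h))
      rw [hs1, hs2] at hrel
      by_cases hi : i = 0
      · subst hi
        rw [if_pos rfl] at hrel
        rw [if_pos rfl]
        rw [eq_div_iff (ht0 0).ne']
        nlinarith [hrel]
      · rw [if_neg (fun h : (0:Fin (q+1)) = i => hi h.symm)]
        rw [if_neg hi] at hrel
        have h2 : t 0 * ((f i) (x 0) + 1) = 0 := by linarith
        rcases mul_eq_zero.1 h2 with h3 | h3
        · exact absurd h3 (ht0 0).ne'
        · linarith
    · exact hfv i ⟨k, hk⟩
  -- continuous versions
  set F : Fin (q+1) → (EuclideanSpace ℝ (Fin q) →L[ℝ] ℝ) :=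
    fun i => LinearMap.toContinuousLinearMap (f i) with hF
  set M : ℝ := ∑ i, ‖F i‖ with hM
  have hMnn : 0 ≤ M := Finset.sum_nonneg (fun i _ => norm_nonneg _)
  have hM0 : ∀ i, ‖F i‖ ≤ M :=
    fun i => Finset.single_le_sum (fun j _ => norm_nonneg (F j)) (Finset.mem_univ i)
  have ht_le : ∀ i, t i ≤ 1 := by
    intro i
    rw [← ht1]
    exact Finset.single_le_sum (fun j _ => (ht0 j).le) (Finset.mem_univ i)
  have hzero : ∀ j, ∑ i, t i * f i (x j) = 0 := by
    intro j
    have h1 : ∀ i, t i * f i (x j) = -(t i) + (if j = i then (1:ℝ) else 0) := by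
      intro i
      rw [hfval i j]
      split
      · rename_i h
        subst h
        have hne : t j ≠ 0 := (ht0 j).ne'
        field_simp
        ring
      · ring
    rw [Finset.sum_congr rfl (fun i _ => h1 i), Finset.sum_add_distrib,
      Finset.sum_neg_distrib, ht1, Finset.sum_ite_eq, if_pos (Finset.mem_univ j)]
    ring
  -- main argument
  intro r hr
  set C : ℝ := M * (2*r) with hC
  have hC0 : 0 ≤ C := mul_nonneg hMnn (by linarith)
  set D : ℝ := C + C / t 0 with hD
  set R : ℝ := D * ∑ k : {k : Fin (q+1) // k ≠ 0}, ‖x (k:Fin (q+1))‖ with hR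
  apply (Metric.isBounded_closedBall (x := (0: EuclideanSpace ℝ (Fin q))) (r := R)).subset
  intro z hz
  simp only [Set.mem_iInter] at hz
  have hy : ∀ i, ∃ y ∈ A i, dist z y < 2*r := by
    intro i
    have h1 : z ∈ thickening (2*r) (A i) :=
      cthickening_subset_thickening' (by linarith) (by linarith) _ (hz i)
    exact mem_thickening_iff.1 h1
  choose y hyA hyd using hy
  -- upper bounds
  have hfub : ∀ i, f i z ≤ C := by
    intro i
    have h1 : f i (y i) ≤ 0 := by
      have hyAi := hyA i
      rw [hA i] at hyAi
      obtain ⟨lam, hl0, hli, hly⟩ := hyAi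
      rw [hly, map_sum]
      apply Finset.sum_nonpos
      intro k _
      rw [map_smul, smul_eq_mul, hfval i k]
      by_cases hk : k = i
      · rw [hk, hli]
        simp
      · rw [if_neg hk]
        nlinarith [hl0 k]
    have h2 : f i z - f i (y i) ≤ |f i (z - y i)| := by
      rw [map_sub]
      exact le_abs_self _
    have h3 : |f i (z - y i)| ≤ ‖F i‖ * ‖z - y i‖ := by
      have := (F i).le_opNorm (z - y i)
      rwa [show ((F i) (z - y i) : ℝ) = f i (z - y i) from rfl, Real.norm_eq_abs] at this
    have h4 : ‖z - y i‖ ≤ 2*r := by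
      rw [← dist_eq_norm]
      exact (hyd i).le
    have h5 : ‖F i‖ * ‖z - y i‖ ≤ M * (2*r) := by
      apply mul_le_mul (hM0 i) h4 (norm_nonneg _) hMnn
    rw [hC]
    linarith
  -- representation of z
  set a : {k : Fin (q+1) // k ≠ 0} → ℝ := fun k => b.repr z k with ha
  have hzrep : z = ∑ k : {k : Fin (q+1) // k ≠ 0}, a k • x (k:Fin (q+1)) := by
    conv_lhs => rw [← b.sum_repr z]
    exact Finset.sum_congr rfl (fun k _ => by rw [hb])
  have hfrep : ∀ i, f i z = ∑ k : {k : Fin (q+1) // k ≠ 0}, a k * f i (x (k:Fin (q+1))) := by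
    intro i
    conv_lhs => rw [hzrep]
    rw [map_sum]
    exact Finset.sum_congr rfl (fun k _ => by rw [map_smul, smul_eq_mul])
  have hgz : ∑ j, t j * f j z = 0 := by
    calc ∑ j, t j * f j z
        = ∑ j, ∑ k : {k : Fin (q+1) // k ≠ 0}, t j * (a k * f j (x (k:Fin (q+1)))) := by
          refine Finset.sum_congr rfl (fun j _ => ?_)
          rw [hfrep j, Finset.mul_sum]
      _ = ∑ k : {k : Fin (q+1) // k ≠ 0}, ∑ j, t j * (a k * f j (x (k:Fin (q+1)))) :=
          Finset.sum_comm
      _ = 0 := by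
          refine Finset.sum_eq_zero (fun k _ => ?_)
          have : ∑ j, t j * (a k * f j (x (k:Fin (q+1))))
              = a k * ∑ j, t j * f j (x (k:Fin (q+1))) := by
            rw [Finset.mul_sum]
            exact Finset.sum_congr rfl (fun j _ => by ring)
          rw [this, hzero, mul_zero]
  -- lower bounds
  have hflb : ∀ i, -C ≤ t i * f i z := by
    intro i
    have h1 : t i * f i z + ∑ j ∈ Finset.univ.erase i, t j * f j z = ∑ j, t j * f j z :=
      Finset.add_sum_erase Finset.univ (fun j => t j * f j z) (Finset.mem_univ i)
    have h2 : ∑ j ∈ Finset.univ.erase i, t j * f j z ≤ ∑ j ∈ Finset.univ.erase i, t j * C :=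
      Finset.sum_le_sum (fun j _ => mul_le_mul_of_nonneg_left (hfub j) (ht0 j).le)
    have h3 : ∑ j ∈ Finset.univ.erase i, t j * C ≤ C := by
      rw [← Finset.sum_mul, Finset.sum_erase_eq_sub (Finset.mem_univ i), ht1]
      nlinarith [ht0 i, ht_le i]
    have h4 : ∑ j, t j * f j z = 0 := hgz
    linarith
  have habs : ∀ i, |f i z| ≤ C / t i := by
    intro i
    have dmc : C / t i * t i = C := div_mul_cancel₀ C (ht0 i).ne'
    have hdnn : 0 ≤ C / t i := div_nonneg hC0 (ht0 i).le
    rw [abs_le]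
    constructor
    · nlinarith [hflb i, ht0 i]
    · nlinarith [hfub i, ht_le i, ht0 i]
  -- coordinate bound
  have hcoord : ∀ k : {k : Fin (q+1) // k ≠ 0}, |a k| ≤ D := by
    intro k
    have h1 : f (k:Fin (q+1)) z - f 0 z = a k * (1 / t (k:Fin (q+1))) := by
      rw [hfrep (k:Fin (q+1)), hfrep 0, ← Finset.sum_sub_distrib]
      have h2 : ∀ m : {k : Fin (q+1) // k ≠ 0},
          a m * f (k:Fin (q+1)) (x (m:Fin (q+1))) - a m * f 0 (x (m:Fin (q+1)))
            = if m = k then a k * (1 / t (k:Fin (q+1))) else 0 := by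
        intro m
        rw [hfval, hfval, if_neg m.2]
        by_cases hm : m = k
        · rw [if_pos (by rw [hm]), if_pos hm]
          subst hm
          have hne : t (m:Fin (q+1)) ≠ 0 := (ht0 _).ne'
          field_simp
          ring
        · rw [if_neg (fun h => hm (Subtype.ext h)), if_neg hm]
          ring
      rw [Finset.sum_congr rfl (fun m _ => h2 m), Finset.sum_ite_eq',
        if_pos (Finset.mem_univ k)]
    have h3 : a k = t (k:Fin (q+1)) * (f (k:Fin (q+1)) z - f 0 z) := by
      rw [h1]
      have hne : t (k:Fin (q+1)) ≠ 0 := (ht0 _).ne'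
      field_simp
    have h4 : |f (k:Fin (q+1)) z - f 0 z| ≤ C / t (k:Fin (q+1)) + C / t 0 :=
      (abs_sub _ _).trans (add_le_add (habs _) (habs 0))
    have h5 : |a k| = t (k:Fin (q+1)) * |f (k:Fin (q+1)) z - f 0 z| := by
      rw [h3, abs_mul, abs_of_pos (ht0 _)]
    have dmc : C / t (k:Fin (q+1)) * t (k:Fin (q+1)) = C := div_mul_cancel₀ C (ht0 _).ne'
    have hd0 : 0 ≤ C / t 0 := div_nonneg hC0 (ht0 0).le
    rw [h5, hD]
    nlinarith [ht0 (k:Fin (q+1)), ht_le (k:Fin (q+1)), abs_nonneg (f (k:Fin (q+1)) z - f 0 z)]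
  -- conclude
  rw [mem_closedBall_zero_iff]
  calc ‖z‖ = ‖∑ k : {k : Fin (q+1) // k ≠ 0}, a k • x (k:Fin (q+1))‖ := by rw [← hzrep]
    _ ≤ ∑ k : {k : Fin (q+1) // k ≠ 0}, ‖a k • x (k:Fin (q+1))‖ := norm_sum_le _ _
    _ = ∑ k : {k : Fin (q+1) // k ≠ 0}, |a k| * ‖x (k:Fin (q+1))‖ := by
        refine Finset.sum_congr rfl (fun k _ => ?_)
        rw [norm_smul, Real.norm_eq_abs]
    _ ≤ ∑ k : {k : Fin (q+1) // k ≠ 0}, D * ‖x (k:Fin (q+1))‖ :=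
        Finset.sum_le_sum (fun k _ => mul_le_mul_of_nonneg_right (hcoord k) (norm_nonneg _))
    _ = R := by rw [← Finset.mul_sum]
end

section
/- In the Euclidean plane ℝ², let Z_0 = {0} × ℝ be the y-axis and Z_1 = {(x, e^x) : x ∈ ℝ} the graph of the exponential function. Then for every s ≥ 0, the pair of thickened sets (Z_0)_s and (Z_1)_s is not polynomially excisive: for every μ ≥ 1 there exists r ≥ 0 such that ((Z_0)_s)_r ∩ ((Z_1)_s)_r is not contained in ((Z_0)_s ∩ (Z_1)_s)_{r^μ}. -/
/-!
The point `(0, eʳ)` lies on the axis and at distance `r` from the point `(r, eʳ)` of the graph,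
so it belongs to both `r`-thickenings. But on `(Z₀)_s` the first coordinate is at most `s`, so
near that strip the graph stays below height `e^{2s}` and `(Z₀)_s ∩ (Z₁)_s` lies below height
`C = e^{2s} + s`. Hence `(0, eʳ)` is at distance at least `eʳ - C` from the intersection, which
beats `r ^ μ` for large `r`.
-/

open Metric Set Real

theorem LipschitzWith.le_add_of_mem_cthickening {X : Type*} [PseudoMetricSpace X] {f : X → ℝ}
    (hf : LipschitzWith 1 f) {E : Set X} {a δ : ℝ} (hE : ∀ y ∈ E, f y ≤ a) (hδ : 0 ≤ δ)
    {x : X} (hx : x ∈ cthickening δ E) : f x ≤ a + δ := by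
  refine le_of_forall_gt_imp_ge_of_dense fun c hc => ?_
  rw [cthickening_eq_iInter_thickening hδ, mem_iInter₂] at hx
  obtain ⟨y, hyE, hxy⟩ := mem_thickening_iff.mp (hx (c - a) (by linarith))
  have hfxy := hf.le_add_mul x y
  rw [NNReal.coe_one, one_mul] at hfxy
  linarith [hE y hyE, dist_comm x y]

theorem EuclideanSpace.lipschitzWith_apply {ι : Type*} [Fintype ι] (i : ι) :
    LipschitzWith 1 fun p : EuclideanSpace ℝ ι => p i :=
  LipschitzWith.of_dist_le_mul fun p q => by
    simpa using PiLp.dist_apply_le (β := fun _ => ℝ) p q i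

theorem apply_one_le_of_mem_cthickening_graph {g : ℝ → ℝ} (hg : Monotone g)
    (hg_cont : Continuous g) {q : EuclideanSpace ℝ (Fin 2)} {a δ : ℝ} (hδ : 0 ≤ δ)
    (hq₀ : q 0 ≤ a) (hq : q ∈ cthickening δ {p : EuclideanSpace ℝ (Fin 2) | p 1 = g (p 0)}) :
    q 1 ≤ g (a + δ) + δ := by
  have hclosed : IsClosed {p : EuclideanSpace ℝ (Fin 2) | p 1 = g (p 0)} :=
    isClosed_eq (by fun_prop) (by fun_prop)
  rw [hclosed.cthickening_eq_biUnion_closedBall hδ, mem_iUnion₂] at hq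
  obtain ⟨w, hw, hqw⟩ := hq
  have h₀ := abs_le.mp ((PiLp.dist_apply_le q w 0).trans hqw)
  have h₁ := abs_le.mp ((PiLp.dist_apply_le q w 1).trans hqw)
  have hgw : g (w 0) ≤ g (a + δ) := hg (by linarith)
  rw [show w 1 = g (w 0) from hw] at h₁
  linarith

theorem exists_rpow_add_lt_exp {μ : ℝ} (hμ : 0 < μ) (C : ℝ) :
    ∃ r : ℝ, 0 ≤ r ∧ r ^ μ + C < exp r := by
  obtain ⟨r, hC, hratio, hr⟩ := (((tendsto_rpow_atTop hμ).eventually_gt_atTop C).and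
    (((tendsto_exp_div_rpow_atTop μ).eventually_ge_atTop 2).and
      (Filter.eventually_gt_atTop 0))).exists
  have hpow : 0 < r ^ μ := rpow_pos_of_pos hr μ
  have hdouble : 2 * r ^ μ ≤ exp r := (le_div_iff₀ hpow).mp hratio
  exact ⟨r, hr.le, by linarith⟩

/-- In the Euclidean plane, the `y`-axis `Z₀` and the graph `Z₁` of the exponential function
do not have polynomially excisive thickenings: for every `s ≥ 0` and every exponent `μ ≥ 1`
there is some `r ≥ 0` for which the polynomial excisiveness inclusion fails. -/
theorem axis_and_exp_graph_not_polyExcisive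
    (Z₀ Z₁ : Set (EuclideanSpace ℝ (Fin 2)))
    (hZ₀ : Z₀ = {p : EuclideanSpace ℝ (Fin 2) | p 0 = 0})
    (hZ₁ : Z₁ = {p : EuclideanSpace ℝ (Fin 2) | p 1 = Real.exp (p 0)}) :
    ∀ s : ℝ, 0 ≤ s → ∀ μ : ℝ, 1 ≤ μ →
      ∃ r : ℝ, 0 ≤ r ∧
        ¬ (cthickening r (cthickening s Z₀) ∩ cthickening r (cthickening s Z₁) ⊆
            cthickening (r ^ μ) (cthickening s Z₀ ∩ cthickening s Z₁)) := by
  intro s hs μ hμ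
  obtain ⟨r, hr, hexp⟩ := exists_rpow_add_lt_exp (by linarith) (exp (s + s) + s)
  refine ⟨r, hr, fun hsub => ?_⟩
  have hp₀ : !₂[0, exp r] ∈ cthickening r (cthickening s Z₀) :=
    self_subset_cthickening _ (self_subset_cthickening _ (hZ₀ ▸ rfl))
  have hp₁ : !₂[0, exp r] ∈ cthickening r (cthickening s Z₁) := by
    refine mem_cthickening_of_dist_le _ !₂[r, exp r] _ _ (self_subset_cthickening _ (hZ₁ ▸ rfl)) ?_
    simp [EuclideanSpace.dist_eq, sqrt_sq hr]
  have hbelow : ∀ q ∈ cthickening s Z₀ ∩ cthickening s Z₁, q 1 ≤ exp (s + s) + s := by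
    rintro q ⟨hq₀, hq₁⟩
    subst hZ₀ hZ₁
    have hq_strip : q 0 ≤ 0 + s :=
      (EuclideanSpace.lipschitzWith_apply (ι := Fin 2) 0).le_add_of_mem_cthickening
        (fun y hy => hy.le) hs hq₀
    exact apply_one_le_of_mem_cthickening_graph exp_monotone continuous_exp hs (by linarith) hq₁
  have hheight := (EuclideanSpace.lipschitzWith_apply 1).le_add_of_mem_cthickening hbelow
    (by positivity) (hsub ⟨hp₀, hp₁⟩)
  simp only [Matrix.cons_val_one, Matrix.cons_val_zero] at hheight
  linarith
end
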